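/- Marginal KL bound: for every step t with 1 ≤ t ≤ T, D_KL(d_t^{π_roll} ‖ d_t^{π_θ}) ≤ (t−1) · D_KL^{tok,max}, where D_KL^{tok,max} = max over steps t and contexts c of D_KL(π_roll(·|c) ‖ π_θ(·|c)) and D_KL(p‖q) = Σ_v p(v) log(p(v)/q(v)). -/

import Mathlib

open Finset

section Setup

variable {X V : Type*}

/-- A policy assigns to each context `(x, y_{<t})` (a prompt together with a token
prefix of length `t`) a strictly positive probability distribution on the next token. -/
structure Policy (X V : Type*) [Fintype V] where
  prob : ∀ t : ℕ, X × (Fin t → V) → V → ℝ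
  pos : ∀ t c v, 0 < prob t c v
  sum_one : ∀ t c, ∑ v, prob t c v = 1

variable [Fintype X] [Fintype V]

/-- Trajectory probability `P^π(y | x) = ∏_t π(y_t | x, y_{<t})`. -/
noncomputable def traj (π : Policy X V) (T : ℕ) (x : X) (y : Fin T → V) : ℝ :=
  ∏ t : Fin T, π.prob t.1 (x, fun s : Fin t.1 => y (Fin.castLE t.isLt.le s)) (y t)

/-- Context visitation mass at prefix length `k`: this is the paper's `d_{k+1}^π`,
a distribution on pairs (prompt, prefix of `k` tokens). -/
noncomputable def visit (π : Policy X V) (P : X → ℝ) (k : ℕ) (c : X × (Fin k → V)) : ℝ :=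
  P c.1 * ∏ s : Fin k, π.prob s.1 (c.1, fun u : Fin s.1 => c.2 (Fin.castLE s.isLt.le u)) (c.2 s)

/-- Total variation distance `½ ∑ |p - q|`. -/
noncomputable def tvDist {α : Type*} [Fintype α] (p q : α → ℝ) : ℝ :=
  (∑ a, |p a - q a|) / 2

/-- KL divergence `∑ p log (p/q)`. -/
noncomputable def klDiv {α : Type*} [Fintype α] (p q : α → ℝ) : ℝ :=
  ∑ a, p a * Real.log (p a / q a)

/-- The objective `J(π) = E_{x∼P} E_{y∼P^π(·|x)}[R(x,y)]`. -/
noncomputable def Jval (P : X → ℝ) (T : ℕ) (R : X → (Fin T → V) → ℝ) (π : Policy X V) : ℝ :=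
  ∑ x, P x * ∑ y : Fin T → V, traj π T x y * R x y

/-- `Q^π(c, v)`: conditional expectation of the reward under continuation by `π`,
given context `c` (of length `k`) and next token `v`. -/
noncomputable def Qval (T : ℕ) (R : X → (Fin T → V) → ℝ) (π : Policy X V)
    (k : ℕ) (hk : k < T) (c : X × (Fin k → V)) (v : V) : ℝ := by
  classical
  exact ∑ y : Fin T → V,
    if (∀ s : Fin k, y (Fin.castLE hk.le s) = c.2 s) ∧ y ⟨k, hk⟩ = v then
      (∏ s : Fin T, if k < s.1 then
          π.prob s.1 (c.1, fun u : Fin s.1 => y (Fin.castLE s.isLt.le u)) (y s)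
        else 1) * R c.1 y
    else 0

/-- `V^π(c) = E_{v ∼ π(·|c)}[Q^π(c, v)]`. -/
noncomputable def Vval (T : ℕ) (R : X → (Fin T → V) → ℝ) (π : Policy X V)
    (k : ℕ) (hk : k < T) (c : X × (Fin k → V)) : ℝ :=
  ∑ v, π.prob k c v * Qval T R π k hk c v

/-- Per-step advantage `A_t(c, v) = Q^{π_roll}(c,v) - V^{π_roll}(c)`. -/
noncomputable def Aval (T : ℕ) (R : X → (Fin T → V) → ℝ) (πroll : Policy X V)
    (k : ℕ) (hk : k < T) (c : X × (Fin k → V)) (v : V) : ℝ :=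
  Qval T R πroll k hk c v - Vval T R πroll k hk c

/-- `g_t(c) = E_{v ∼ π_θ(·|c)}[A_t(c, v)]`. -/
noncomputable def gval (T : ℕ) (R : X → (Fin T → V) → ℝ) (πroll πθ : Policy X V)
    (k : ℕ) (hk : k < T) (c : X × (Fin k → V)) : ℝ :=
  ∑ v, πθ.prob k c v * Aval T R πroll k hk c v

/-- Surrogate objective `L = ∑_{t=1}^T E_{c ∼ d_t^{π_roll}}[g_t(c)]`. -/
noncomputable def surrogate (P : X → ℝ) (T : ℕ) (R : X → (Fin T → V) → ℝ)
    (πroll πθ : Policy X V) : ℝ :=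
  ∑ k : Fin T, ∑ c : X × (Fin k.1 → V), visit πroll P k.1 c * gval T R πroll πθ k.1 k.isLt c

/-- Approximation error `Error = J(π_θ) - J(π_roll) - L`. -/
noncomputable def errVal (P : X → ℝ) (T : ℕ) (R : X → (Fin T → V) → ℝ)
    (πroll πθ : Policy X V) : ℝ :=
  Jval P T R πθ - Jval P T R πroll - surrogate P T R πroll πθ

/-- Sequence-level KL divergence `D_KL^seq = E_{x∼P}[D_KL(P^{π_roll}(·|x) ‖ P^{π_θ}(·|x))]`. -/
noncomputable def seqKL (P : X → ℝ) (T : ℕ) (πroll πθ : Policy X V) : ℝ :=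
  ∑ x, P x * klDiv (fun y : Fin T → V => traj πroll T x y) (fun y => traj πθ T x y)

end Setup

/-!
Since `d_{k+1}^π(x, y_{≤k}) = d_k^π(x, y_{<k}) · π(y_k | x, y_{<k})`, the chain rule for KL
divergence peels off one token at a time:
`KL(d_{k+1}^{roll} ‖ d_{k+1}^θ) = KL(d_k^{roll} ‖ d_k^θ) + E_{c ∼ d_k^{roll}} KL(π_roll(·|c) ‖ π_θ(·|c))`.
Telescoping from `d_1 = P` writes the marginal KL as a sum of `t - 1` expected token-level
KL divergences, each at most `D_KL^{tok,max}`.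
-/

section KLDiv

variable {α β : Type*} [Fintype α] [Fintype β]

theorem klDiv_self (p : α → ℝ) : klDiv p p = 0 :=
  sum_eq_zero fun a _ => by
    by_cases h : p a = 0 <;> simp [h]

theorem klDiv_chain_rule (p q : α → ℝ) (f g : α → β → ℝ)
    (hpq : ∀ a, p a ≠ 0 → q a ≠ 0) (hf : ∀ a b, f a b ≠ 0) (hg : ∀ a b, g a b ≠ 0)
    (hf1 : ∀ a, ∑ b, f a b = 1) :
    klDiv (fun ab : α × β => p ab.1 * f ab.1 ab.2) (fun ab => q ab.1 * g ab.1 ab.2)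
      = klDiv p q + ∑ a, p a * klDiv (f a) (g a) := by
  unfold klDiv
  rw [Fintype.sum_prod_type, ← sum_add_distrib]
  refine sum_congr rfl fun a _ => ?_
  by_cases hp : p a = 0
  · simp [hp]
  have hlog : ∀ b, Real.log (p a * f a b / (q a * g a b))
      = Real.log (p a / q a) + Real.log (f a b / g a b) := fun b => by
    rw [← div_mul_div_comm, Real.log_mul (div_ne_zero hp (hpq a hp))
      (div_ne_zero (hf a b) (hg a b))]
  calc ∑ b, p a * f a b * Real.log (p a * f a b / (q a * g a b))
      = p a * Real.log (p a / q a) * ∑ b, f a b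
          + p a * ∑ b, f a b * Real.log (f a b / g a b) := by
        simp only [hlog, mul_sum, ← sum_add_distrib]
        exact sum_congr rfl fun b _ => by ring
    _ = p a * Real.log (p a / q a) + p a * ∑ b, f a b * Real.log (f a b / g a b) := by
        rw [hf1, mul_one]

end KLDiv

section Visit

variable {X V : Type*} [Fintype V]

def contextSnocEquiv (X V : Type*) (k : ℕ) :
    X × (Fin (k + 1) → V) ≃ (X × (Fin k → V)) × V where
  toFun c := ((c.1, Fin.init c.2), c.2 (Fin.last k))
  invFun d := (d.1.1, Fin.snoc d.1.2 d.2)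
  left_inv c := by simp
  right_inv d := by simp

theorem visit_zero (π : Policy X V) (P : X → ℝ) (c : X × (Fin 0 → V)) :
    visit π P 0 c = P c.1 := by
  simp [visit]

theorem visit_succ (π : Policy X V) (P : X → ℝ) (k : ℕ) (c : X × (Fin (k + 1) → V)) :
    visit π P (k + 1) c
      = visit π P k (c.1, Fin.init c.2) * π.prob k (c.1, Fin.init c.2) (c.2 (Fin.last k)) := by
  rw [visit, Fin.prod_univ_castSucc, ← mul_assoc]
  rfl

theorem visit_ne_zero_iff (π : Policy X V) (P : X → ℝ) (k : ℕ) (c : X × (Fin k → V)) :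
    visit π P k c ≠ 0 ↔ P c.1 ≠ 0 := by
  have hprod : ∏ s : Fin k, π.prob s.1 (c.1, fun u => c.2 (Fin.castLE s.isLt.le u)) (c.2 s) ≠ 0 :=
    prod_ne_zero_iff.2 fun s _ => (π.pos _ _ _).ne'
  simp [visit, hprod]

theorem visit_nonneg (π : Policy X V) {P : X → ℝ} (hP0 : ∀ x, 0 ≤ P x) (k : ℕ)
    (c : X × (Fin k → V)) : 0 ≤ visit π P k c :=
  mul_nonneg (hP0 c.1) (prod_nonneg fun _ _ => (π.pos _ _ _).le)

theorem sum_visit [Fintype X] (π : Policy X V) {P : X → ℝ} (hP1 : ∑ x, P x = 1) (k : ℕ) :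
    ∑ c, visit π P k c = 1 := by
  induction k with
  | zero => simp [visit_zero, Fintype.sum_prod_type, hP1]
  | succ k ih =>
    rw [← (contextSnocEquiv X V k).symm.sum_comp, Fintype.sum_prod_type, ← ih]
    refine sum_congr rfl fun c _ => ?_
    simp [contextSnocEquiv, visit_succ, ← mul_sum, π.sum_one]

theorem klDiv_visit_succ [Fintype X] (P : X → ℝ) (πroll πθ : Policy X V) (k : ℕ) :
    klDiv (visit πroll P (k + 1)) (visit πθ P (k + 1))
      = klDiv (visit πroll P k) (visit πθ P k)
        + ∑ c, visit πroll P k c * klDiv (πroll.prob k c) (πθ.prob k c) := by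
  have hsplit : klDiv (visit πroll P (k + 1)) (visit πθ P (k + 1))
      = klDiv (fun d : (X × (Fin k → V)) × V => visit πroll P k d.1 * πroll.prob k d.1 d.2)
          (fun d => visit πθ P k d.1 * πθ.prob k d.1 d.2) :=
    Fintype.sum_equiv (contextSnocEquiv X V k) _ _ fun c => by
      rw [visit_succ, visit_succ]; rfl
  rw [hsplit]
  exact klDiv_chain_rule _ _ _ _
    (fun c h => (visit_ne_zero_iff πθ P k c).2 ((visit_ne_zero_iff πroll P k c).1 h))
    (fun _ _ => (πroll.pos _ _ _).ne') (fun _ _ => (πθ.pos _ _ _).ne')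
    (fun _ => πroll.sum_one _ _)

theorem klDiv_visit_eq_sum [Fintype X] (P : X → ℝ) (πroll πθ : Policy X V) (k : ℕ) :
    klDiv (visit πroll P k) (visit πθ P k)
      = ∑ s ∈ range k, ∑ c, visit πroll P s c * klDiv (πroll.prob s c) (πθ.prob s c) := by
  induction k with
  | zero =>
    have hθ : visit πθ P 0 = visit πroll P 0 := funext fun c => by rw [visit_zero, visit_zero]
    rw [hθ, klDiv_self, range_zero, sum_empty]
  | succ k ih => rw [klDiv_visit_succ, ih, sum_range_succ]

theorem sum_visit_mul_le [Fintype X] (π : Policy X V) {P : X → ℝ} (hP0 : ∀ x, 0 ≤ P x)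
    (hP1 : ∑ x, P x = 1) (k : ℕ) {f : X × (Fin k → V) → ℝ} {D : ℝ} (hf : ∀ c, f c ≤ D) :
    ∑ c, visit π P k c * f c ≤ D :=
  calc ∑ c, visit π P k c * f c ≤ ∑ c, visit π P k c * D :=
        sum_le_sum fun c _ => mul_le_mul_of_nonneg_left (hf c) (visit_nonneg π hP0 k c)
    _ = D := by rw [← sum_mul, sum_visit π hP1, one_mul]

end Visit

theorem marginal_kl_bound_general
    {X V : Type*} [Fintype X] [Fintype V]
    (T : ℕ)
    (P : X → ℝ) (hP0 : ∀ x, 0 ≤ P x) (hP1 : ∑ x, P x = 1)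
    (πroll πθ : Policy X V)
    (Dkl : ℝ)
    (hD : ∀ k : ℕ, k < T → ∀ c : X × (Fin k → V),
      klDiv (πroll.prob k c) (πθ.prob k c) ≤ Dkl)
    (t : ℕ) (ht1 : 1 ≤ t) (ht2 : t ≤ T) :
    klDiv (visit πroll P (t - 1)) (visit πθ P (t - 1)) ≤ ((t : ℝ) - 1) * Dkl := by
  have hstep : ∀ s ∈ range (t - 1),
      ∑ c, visit πroll P s c * klDiv (πroll.prob s c) (πθ.prob s c) ≤ Dkl := fun s hs =>
    sum_visit_mul_le πroll hP0 hP1 s (hD s (by grind))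
  calc klDiv (visit πroll P (t - 1)) (visit πθ P (t - 1))
      ≤ (range (t - 1)).card • Dkl := by
        rw [klDiv_visit_eq_sum]
        exact sum_le_card_nsmul _ _ _ hstep
    _ = ((t : ℝ) - 1) * Dkl := by
        rw [card_range, nsmul_eq_mul, Nat.cast_sub ht1, Nat.cast_one]

/-- **Marginal KL bound**: for every `1 ≤ t ≤ T`,
`D_KL(d_t^{π_roll} ‖ d_t^{π_θ}) ≤ (t−1) · D_KL^tok,max`.
Here `Dkl` is (an upper bound on, in particular the maximum of) the token-level KL
divergences `D_KL(π_roll(·|c) ‖ π_θ(·|c))` over all steps and contexts, and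
`d_t^π = visit π P (t−1)`. -/
theorem marginal_kl_bound
    {X V : Type*} [Fintype X] [Fintype V]
    (T : ℕ) (hT : 1 ≤ T)
    (P : X → ℝ) (hP0 : ∀ x, 0 ≤ P x) (hP1 : ∑ x, P x = 1)
    (πroll πθ : Policy X V)
    (Dkl : ℝ)
    (hD : ∀ k : ℕ, k < T → ∀ c : X × (Fin k → V),
      klDiv (πroll.prob k c) (πθ.prob k c) ≤ Dkl)
    (t : ℕ) (ht1 : 1 ≤ t) (ht2 : t ≤ T) :
    klDiv (visit πroll P (t - 1)) (visit πθ P (t - 1)) ≤ ((t : ℝ) - 1) * Dkl :=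
  marginal_kl_bound_general T P hP0 hP1 πroll πθ Dkl hD t ht1 ht2
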